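/- arXiv:1706.05554 — 7 statements merged into one kernel-verified Lean document; each statement's English description precedes it below -/
import Mathlib

section
/- There exists an absolute constant C > 0 such that the following holds. Let n, d be positive integers, let p_1, ..., p_n be vectors in ℝ^d, and let u = (u_1, ..., u_n) be a distribution over [n] (i.e., u_i ≥ 0 for all i and Σ_{i=1}^n u_i = 1). Let E_u = Σ_{i=1}^n u_i p_i and var_u = Σ_{i=1}^n u_i ‖p_i − E_u‖². Then for every integer N ≥ 1 there exists a distribution w = (w_1, ..., w_n) over [n] having at most C·N nonzero entries such that ‖Σ_{i=1}^n u_i p_i − Σ_{i=1}^n w_i p_i‖² ≤ var_u / N, where ‖·‖ denotes the Euclidean norm. -/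
open Finset

/-- If the `u`-weighted average of `a` is at most `B`, some `a i` is at most `B`. -/
lemma exists_le_weighted {n : ℕ} (u a : Fin n → ℝ) (hu : ∀ i, 0 ≤ u i)
    (hsum : ∑ i, u i = 1) (B : ℝ) (h : ∑ i, u i * a i ≤ B) :
    ∃ i, a i ≤ B := by
  by_contra hc
  push_neg at hc
  obtain ⟨i₀, hi₀⟩ : ∃ i, 0 < u i := by
    by_contra hall
    push_neg at hall
    have : ∑ i, u i = 0 :=
      Finset.sum_eq_zero fun i _ => le_antisymm (hall i) (hu i)
    rw [this] at hsum; norm_num at hsum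
  have hlt : ∑ i, u i * B < ∑ i, u i * a i :=
    Finset.sum_lt_sum (fun i _ => mul_le_mul_of_nonneg_left (hc i).le (hu i))
      ⟨i₀, Finset.mem_univ i₀, mul_lt_mul_of_pos_left (hc i₀) hi₀⟩
  rw [← Finset.sum_mul, hsum, one_mul] at hlt
  linarith

/-- There exists an absolute constant `C > 0` such that: for all positive `n, d`,
vectors `p₁, …, pₙ ∈ ℝ^d`, and every distribution `u` over `[n]`, letting
`E_u = ∑ uᵢ pᵢ` and `var_u = ∑ uᵢ ‖pᵢ − E_u‖²`, for every integer `N ≥ 1` there is a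
distribution `w` over `[n]` with at most `C·N` nonzero entries such that
`‖∑ uᵢ pᵢ − ∑ wᵢ pᵢ‖² ≤ var_u / N`. -/
theorem coreset_for_average_vector :
    ∃ C : ℝ, 0 < C ∧
      ∀ (n d : ℕ), 0 < n → 0 < d →
        ∀ (p : Fin n → EuclideanSpace ℝ (Fin d)) (u : Fin n → ℝ),
          (∀ i, 0 ≤ u i) → (∑ i, u i = 1) →
            ∀ N : ℕ, 1 ≤ N →
              ∃ w : Fin n → ℝ,
                (∀ i, 0 ≤ w i) ∧ (∑ i, w i = 1) ∧
                (({i | w i ≠ 0}.ncard : ℝ) ≤ C * N) ∧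
                ‖(∑ i, u i • p i) - (∑ i, w i • p i)‖ ^ 2 ≤
                  (∑ i, u i * ‖p i - ∑ j, u j • p j‖ ^ 2) / N := by
  refine ⟨1, one_pos, ?_⟩
  intro n d hn hd p u hu hsum N hN
  set E : EuclideanSpace ℝ (Fin d) := ∑ j, u j • p j with hE
  set V : ℝ := ∑ i, u i * ‖p i - E‖ ^ 2 with hV
  have hzero : ∑ i, u i • (p i - E) = (0 : EuclideanSpace ℝ (Fin d)) := by
    simp only [smul_sub]
    rw [Finset.sum_sub_distrib, ← Finset.sum_smul, hsum, one_smul, ← hE, sub_self]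
  have hinner : ∀ v : EuclideanSpace ℝ (Fin d),
      ∑ i, u i * inner ℝ v (p i - E) = (0 : ℝ) := by
    intro v
    have h1 : ∑ i, u i * inner ℝ v (p i - E)
        = inner ℝ v (∑ i, u i • (p i - E)) := by
      rw [inner_sum]
      exact Finset.sum_congr rfl fun i _ => (real_inner_smul_right v _ (u i)).symm
    rw [h1, hzero, inner_zero_right]
  have hexp : ∀ (v w : EuclideanSpace ℝ (Fin d)) (a b : ℝ),
      ‖a • v + b • w‖ ^ 2
        = a ^ 2 * ‖v‖ ^ 2 + 2 * a * b * inner ℝ v w + b ^ 2 * ‖w‖ ^ 2 := by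
    intro v w a b
    rw [norm_add_sq_real, norm_smul, norm_smul, real_inner_smul_left,
      real_inner_smul_right]
    simp only [Real.norm_eq_abs, mul_pow, sq_abs]
    ring
  suffices h : ∀ k : ℕ, 1 ≤ k → ∃ w : Fin n → ℝ,
      (∀ i, 0 ≤ w i) ∧ (∑ i, w i = 1) ∧ ({i | w i ≠ 0}.ncard ≤ k) ∧
      ‖E - ∑ i, w i • p i‖ ^ 2 ≤ V / k by
    obtain ⟨w, h1, h2, h3, h4⟩ := h N hN
    refine ⟨w, h1, h2, ?_, h4⟩
    rw [one_mul]
    exact_mod_cast h3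
  intro k hk
  induction k, hk using Nat.le_induction with
  | base =>
    obtain ⟨i, hi⟩ := exists_le_weighted u (fun i => ‖p i - E‖ ^ 2) hu hsum V le_rfl
    refine ⟨fun j => if j = i then 1 else 0, ?_, ?_, ?_, ?_⟩
    · intro j
      by_cases h : j = i <;> simp [h]
    · simp
    · have hsub : {j | (if j = i then (1 : ℝ) else 0) ≠ 0} ⊆ {i} := by
        intro j hj
        simp only [Set.mem_setOf_eq] at hj
        by_contra hji
        simp only [Set.mem_singleton_iff] at hji
        simp [hji] at hj
      calc {j | (if j = i then (1:ℝ) else 0) ≠ 0}.ncard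
          ≤ ({i} : Set (Fin n)).ncard := Set.ncard_le_ncard hsub (Set.finite_singleton i)
        _ = 1 := Set.ncard_singleton i
    · have : ∑ j, (if j = i then (1:ℝ) else 0) • p j = p i := by
        simp [ite_smul]
      rw [this, Nat.cast_one, div_one, norm_sub_rev]
      exact hi
  | succ k hk ih =>
    obtain ⟨w, hw0, hw1, hwcard, hwerr⟩ := ih
    set x : EuclideanSpace ℝ (Fin d) := ∑ i, w i • p i with hx
    have hk0 : (0 : ℝ) < (k : ℝ) := by exact_mod_cast hk
    have hk1 : (0 : ℝ) < (k : ℝ) + 1 := by positivity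
    set c : ℝ := (k : ℝ) / ((k : ℝ) + 1) with hc
    set s : ℝ := 1 / ((k : ℝ) + 1) with hs
    have havg : ∑ i, u i * ‖c • (x - E) + s • (p i - E)‖ ^ 2 ≤ V / ((k : ℝ) + 1) := by
      have heq : ∑ i, u i * ‖c • (x - E) + s • (p i - E)‖ ^ 2
          = c ^ 2 * ‖x - E‖ ^ 2 + s ^ 2 * V := by
        have hcongr : ∀ i ∈ Finset.univ,
            u i * ‖c • (x - E) + s • (p i - E)‖ ^ 2
              = c ^ 2 * ‖x - E‖ ^ 2 * u i
                + 2 * c * s * (u i * inner ℝ (x - E) (p i - E))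
                + s ^ 2 * (u i * ‖p i - E‖ ^ 2) := by
          intro i _
          rw [hexp]
          ring
        rw [Finset.sum_congr rfl hcongr, Finset.sum_add_distrib,
          Finset.sum_add_distrib, ← Finset.mul_sum, ← Finset.mul_sum,
          ← Finset.mul_sum, hsum, hinner, ← hV]
        ring
      rw [heq]
      have herr : ‖x - E‖ ^ 2 ≤ V / (k : ℝ) := by rw [norm_sub_rev]; exact hwerr
      have hc2 : (0 : ℝ) ≤ c ^ 2 := sq_nonneg c
      have key : c ^ 2 * (V / (k : ℝ)) + s ^ 2 * V = V / ((k : ℝ) + 1) := by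
        rw [hc, hs]
        field_simp
      calc c ^ 2 * ‖x - E‖ ^ 2 + s ^ 2 * V
          ≤ c ^ 2 * (V / (k : ℝ)) + s ^ 2 * V := by
            have := mul_le_mul_of_nonneg_left herr hc2
            linarith
        _ = V / ((k : ℝ) + 1) := key
    obtain ⟨i, hi⟩ := exists_le_weighted u
      (fun i => ‖c • (x - E) + s • (p i - E)‖ ^ 2) hu hsum _ havg
    refine ⟨fun j => ((k : ℝ) * w j + if j = i then 1 else 0) / ((k : ℝ) + 1),
      ?_, ?_, ?_, ?_⟩
    · intro j
      apply div_nonneg _ hk1.le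
      have := hw0 j
      split <;> nlinarith
    · rw [← Finset.sum_div, Finset.sum_add_distrib, ← Finset.mul_sum, hw1]
      simp
      field_simp
      exact hk1.ne'
    · have hsub : {j | ((k : ℝ) * w j + if j = i then 1 else 0) / ((k : ℝ) + 1) ≠ 0}
          ⊆ insert i {j | w j ≠ 0} := by
        intro j hj
        simp only [Set.mem_setOf_eq] at hj
        rcases eq_or_ne j i with h | h
        · exact Set.mem_insert_iff.mpr (Or.inl h)
        · refine Set.mem_insert_iff.mpr (Or.inr ?_)
          simp only [Set.mem_setOf_eq]
          intro hwj
          apply hj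
          rw [hwj, if_neg h]
          simp
      calc {j | ((k : ℝ) * w j + if j = i then 1 else 0) / ((k : ℝ) + 1) ≠ 0}.ncard
          ≤ (insert i {j | w j ≠ 0}).ncard :=
            Set.ncard_le_ncard hsub (Set.toFinite _)
        _ ≤ {j | w j ≠ 0}.ncard + 1 := Set.ncard_insert_le i _
        _ ≤ k + 1 := by omega
    · have hsumw : ∑ j, (((k : ℝ) * w j + if j = i then 1 else 0) / ((k : ℝ) + 1)) • p j
          = c • x + s • p i := by
        have hterm : ∀ j ∈ Finset.univ,
            (((k : ℝ) * w j + if j = i then 1 else 0) / ((k : ℝ) + 1)) • p j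
              = c • (w j • p j) + ((if j = i then (1:ℝ) else 0) / ((k : ℝ) + 1)) • p j := by
          intro j _
          rw [smul_smul, ← add_smul]
          congr 1
          rw [hc]
          field_simp
        rw [Finset.sum_congr rfl hterm, Finset.sum_add_distrib, ← Finset.smul_sum, ← hx]
        congr 1
        rw [hs]
        simp [ite_div, ite_smul]
      rw [hsumw]
      have hids : E - (c • x + s • p i) = -(c • (x - E) + s • (p i - E)) := by
        have hcs : c + s = 1 := by rw [hc, hs]; field_simp
        rw [smul_sub, smul_sub]
        rw [show c • x - c • E + (s • p i - s • E) = c • x + s • p i - (c + s) • E by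
          rw [add_smul]; abel]
        rw [hcs, one_smul]
        abel
      rw [hids, norm_neg]
      push_cast
      exact hi
end

section
/- For every finite set of n points p_1, ..., p_n in ℝ^d with mean p̄ = (1/n) Σ_{i=1}^n p_i, and every integer N ≥ 1, there exist a subset S ⊆ [n] of at most C·N indices (where C > 0 is an absolute constant) and nonnegative weights (w_i)_{i∈S} with Σ_{i∈S} w_i = 1 such that ‖p̄ − Σ_{i∈S} w_i p_i‖² ≤ (1/(N·n)) Σ_{i=1}^n ‖p_i − p̄‖², where ‖·‖ denotes the Euclidean norm. -/
open Finset

/-- For every finite set of `n` points in `ℝ^d` with mean `p̄ = (1/n) ∑ pᵢ` and every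
integer `N ≥ 1`, there are a subset `S ⊆ [n]` with `|S| ≤ C·N` (for an absolute constant
`C > 0`) and nonnegative weights summing to `1` on `S` such that
`‖p̄ − ∑_{i∈S} wᵢ pᵢ‖² ≤ (1/(N·n)) ∑ᵢ ‖pᵢ − p̄‖²`. -/
theorem coreset_for_uniform_mean :
    ∃ C : ℝ, 0 < C ∧
      ∀ (n d : ℕ), 0 < n →
        ∀ (p : Fin n → EuclideanSpace ℝ (Fin d)),
          ∀ N : ℕ, 1 ≤ N →
            ∃ (S : Finset (Fin n)) (w : Fin n → ℝ),
              ((S.card : ℝ) ≤ C * N) ∧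
              (∀ i ∈ S, 0 ≤ w i) ∧ (∑ i ∈ S, w i = 1) ∧
              ‖((n : ℝ)⁻¹ • ∑ i, p i) - ∑ i ∈ S, w i • p i‖ ^ 2 ≤
                (1 / ((N : ℝ) * n)) *
                  ∑ i, ‖p i - (n : ℝ)⁻¹ • ∑ j, p j‖ ^ 2 := by
  refine ⟨1, one_pos, ?_⟩
  intro n d hn p N hN
  set pbar : EuclideanSpace ℝ (Fin d) := (n : ℝ)⁻¹ • ∑ i, p i with hpbar
  set X : Fin n → EuclideanSpace ℝ (Fin d) := fun i => p i - pbar with hXdef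
  set σS : ℝ := ∑ i, ‖X i‖ ^ 2 with hσS
  have hnR : (0 : ℝ) < n := by exact_mod_cast hn
  have hnne : (n : ℝ) ≠ 0 := ne_of_gt hnR
  have hNR : (0 : ℝ) < N := by exact_mod_cast hN
  have hNne : (N : ℝ) ≠ 0 := ne_of_gt hNR
  have hXsum : ∑ i, X i = 0 := by
    simp only [hXdef, Finset.sum_sub_distrib, Finset.sum_const, Finset.card_univ,
      Fintype.card_fin, sub_eq_zero, hpbar]
    rw [← Nat.cast_smul_eq_nsmul ℝ, smul_smul, mul_inv_cancel₀ hnne, one_smul]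
  have hσnonneg : 0 ≤ σS := Finset.sum_nonneg fun i _ => by positivity
  -- key induction
  have key : ∀ M : ℕ, ∃ c : Fin n → ℕ, (∑ i, c i) = M ∧
      ‖∑ i, (c i : ℝ) • X i‖ ^ 2 ≤ M * σS / n := by
    intro M
    induction M with
    | zero => exact ⟨0, by simp, by simp [div_nonneg hσnonneg hnR.le]⟩
    | succ M ih =>
      obtain ⟨c, hc, hv⟩ := ih
      set v : EuclideanSpace ℝ (Fin d) := ∑ i, (c i : ℝ) • X i with hvdef
      have havg : ∑ j, ‖v + X j‖ ^ 2 ≤ ∑ _j : Fin n, (((M : ℝ) + 1) * σS / n) := by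
        have expand : ∀ j : Fin n, ‖v + X j‖ ^ 2
            = ‖v‖ ^ 2 + 2 * inner ℝ v (X j) + ‖X j‖ ^ 2 := fun j => by
          rw [← norm_add_sq_real]
        calc ∑ j, ‖v + X j‖ ^ 2
            = ∑ j, (‖v‖ ^ 2 + 2 * inner ℝ v (X j) + ‖X j‖ ^ 2) :=
              Finset.sum_congr rfl fun j _ => expand j
          _ = (n : ℝ) * ‖v‖ ^ 2 + 2 * inner ℝ v (∑ j, X j) + σS := by
              rw [Finset.sum_add_distrib, Finset.sum_add_distrib, Finset.sum_const,
                Finset.card_univ, Fintype.card_fin, ← Finset.mul_sum, ← inner_sum,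
                nsmul_eq_mul, hσS]
          _ = (n : ℝ) * ‖v‖ ^ 2 + σS := by
              rw [hXsum, inner_zero_right]; ring
          _ ≤ (M : ℝ) * σS + σS := by
              have := mul_le_mul_of_nonneg_left hv hnR.le
              rw [mul_div_cancel₀ _ hnne] at this
              linarith
          _ = ∑ _j : Fin n, (((M : ℝ) + 1) * σS / n) := by
              rw [Finset.sum_const, Finset.card_univ, Fintype.card_fin, nsmul_eq_mul]
              field_simp
      obtain ⟨j, -, hj⟩ := Finset.exists_le_of_sum_le ⟨⟨0, hn⟩, Finset.mem_univ _⟩ havg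
      refine ⟨fun i => c i + if i = j then 1 else 0, ?_, ?_⟩
      · rw [Finset.sum_add_distrib, hc, Finset.sum_ite_eq' _ j fun _ => 1]
        simp
      · have : ∑ i, ((c i + if i = j then 1 else 0 : ℕ) : ℝ) • X i = v + X j := by
          simp only [Nat.cast_add, Nat.cast_ite, Nat.cast_one, Nat.cast_zero, add_smul,
            Finset.sum_add_distrib, ite_smul, one_smul, zero_smul, Finset.sum_ite_eq',
            Finset.mem_univ, if_true, hvdef]
        rw [this]
        calc ‖v + X j‖ ^ 2 ≤ ((M : ℝ) + 1) * σS / n := hj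
          _ = (M + 1 : ℕ) * σS / n := by push_cast; ring
  obtain ⟨c, hc, hv⟩ := key N
  set v : EuclideanSpace ℝ (Fin d) := ∑ i, (c i : ℝ) • X i with hvdef
  refine ⟨Finset.univ.filter (fun i => c i ≠ 0), fun i => (c i : ℝ) / N, ?_, ?_, ?_, ?_⟩
  · rw [one_mul]
    have h1 : (Finset.univ.filter (fun i => c i ≠ 0)).card
        ≤ ∑ i ∈ Finset.univ.filter (fun i => c i ≠ 0), c i := by
      calc (Finset.univ.filter (fun i => c i ≠ 0)).card
          = ∑ _i ∈ Finset.univ.filter (fun i => c i ≠ 0), 1 := by simp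
        _ ≤ ∑ i ∈ Finset.univ.filter (fun i => c i ≠ 0), c i :=
            Finset.sum_le_sum fun i hi =>
              Nat.one_le_iff_ne_zero.2 (Finset.mem_filter.1 hi).2
    have h2 : ∑ i ∈ Finset.univ.filter (fun i => c i ≠ 0), c i = N := by
      rw [Finset.sum_filter_ne_zero, hc]
    exact_mod_cast h1.trans_eq h2
  · intro i _
    positivity
  · rw [← Finset.sum_div, div_eq_one_iff_eq hNne, ← Nat.cast_sum]
    rw [Finset.sum_filter_ne_zero, hc]
  · have hwfull : ∑ i ∈ Finset.univ.filter (fun i => c i ≠ 0), ((c i : ℝ) / N) • p i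
        = ∑ i, ((c i : ℝ) / N) • p i := by
      apply Finset.sum_subset (Finset.filter_subset _ _)
      intro i _ hi
      simp only [Finset.mem_filter, Finset.mem_univ, true_and, not_not] at hi
      simp [hi]
    have hdiff : pbar - ∑ i, ((c i : ℝ) / N) • p i = -((N : ℝ)⁻¹ • v) := by
      have hbar : ∑ i, ((c i : ℝ) / N) • pbar = pbar := by
        rw [← Finset.sum_smul, ← Finset.sum_div, ← Nat.cast_sum, hc, div_self hNne, one_smul]
      have hEq : ∑ i, (N : ℝ)⁻¹ • (((c i : ℝ)) • X i)
          = (∑ i, ((c i : ℝ) / N) • p i) - pbar := by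
        rw [← hbar, ← Finset.sum_sub_distrib]
        refine Finset.sum_congr rfl fun i _ => ?_
        simp only [hXdef, smul_smul, smul_sub, div_eq_inv_mul]
      rw [hvdef, Finset.smul_sum, hEq, neg_sub]
    rw [hwfull, hdiff, norm_neg, norm_smul]
    rw [mul_pow]
    have : ‖(N : ℝ)⁻¹‖ ^ 2 = ((N : ℝ) * N)⁻¹ := by
      rw [Real.norm_eq_abs, sq_abs, sq, mul_inv]
    rw [this]
    have hfinal : ((N : ℝ) * N)⁻¹ * ‖v‖ ^ 2 ≤ ((N : ℝ) * N)⁻¹ * (N * σS / n) := by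
      apply mul_le_mul_of_nonneg_left hv
      positivity
    refine hfinal.trans_eq ?_
    rw [hσS]
    field_simp
end

section
/- Let q_1, ..., q_n be unit vectors in ℝ^m and let s ∈ D^n be a distribution. Then for every integer N ≥ 1 there exists a distribution w' = (w'_1, ..., w'_n) ∈ D^n with at most N nonzero entries such that ‖Σ_{i=1}^n (s_i − w'_i) q_i‖² ≤ 1/N, where ‖·‖ denotes the Euclidean norm. Equivalently, the point Σ_i s_i q_i in the convex hull of {q_1, ..., q_n} can be approximated within squared distance 1/N by a convex combination of at most N of the vectors q_i. -/
open Finset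

local notation "⟪" x ", " y "⟫" => @inner ℝ _ _ x y

lemma key_step {n m : ℕ} (q : Fin n → EuclideanSpace ℝ (Fin m))
    (hq : ∀ i, ‖q i‖ = 1)
    (s : Fin n → ℝ) (hs0 : ∀ i, 0 ≤ s i) (hs1 : ∑ i, s i = 1)
    (p : EuclideanSpace ℝ (Fin m)) (hp : p = ∑ i, s i • q i)
    (v : EuclideanSpace ℝ (Fin m)) :
    ∃ i, ‖v + (q i - p)‖ ^ 2 ≤ ‖v‖ ^ 2 + 1 := by
  by_contra h
  push_neg at h
  -- expectation computation
  have hsum : ∑ i, s i * ‖v + (q i - p)‖ ^ 2 = ‖v‖ ^ 2 + 1 - ‖p‖ ^ 2 := by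
    have expand : ∀ i, ‖v + (q i - p)‖ ^ 2
        = ‖v‖ ^ 2 + 2 * ⟪v, q i - p⟫ + (1 - 2 * ⟪q i, p⟫ + ‖p‖ ^ 2) := by
      intro i
      rw [norm_add_sq_real, norm_sub_sq_real, hq i]
      ring
    simp only [expand]
    have h1 : ∑ i, s i * ⟪v, q i - p⟫ = 0 := by
      have : ∑ i, s i * ⟪v, q i - p⟫ = ⟪v, ∑ i, s i • (q i - p)⟫ := by
        rw [inner_sum]
        exact Finset.sum_congr rfl fun i _ => by rw [real_inner_smul_right]
      rw [this]
      have : (∑ i, s i • (q i - p)) = 0 := by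
        simp only [smul_sub]
        rw [Finset.sum_sub_distrib, ← Finset.sum_smul, hs1, one_smul, ← hp, sub_self]
      rw [this, inner_zero_right]
    have h2 : ∑ i, s i * ⟪q i, p⟫ = ‖p‖ ^ 2 := by
      have : ∑ i, s i * ⟪q i, p⟫ = ⟪∑ i, s i • q i, p⟫ := by
        rw [sum_inner]
        exact Finset.sum_congr rfl fun i _ => by rw [real_inner_smul_left]
      rw [this, ← hp, real_inner_self_eq_norm_sq]
    have expand2 : ∀ i, s i * (‖v‖ ^ 2 + 2 * ⟪v, q i - p⟫ + (1 - 2 * ⟪q i, p⟫ + ‖p‖ ^ 2))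
        = (‖v‖^2 + 1 + ‖p‖^2) * s i + 2 * (s i * ⟪v, q i - p⟫) - 2 * (s i * ⟪q i, p⟫) := by
      intro i; ring
    simp only [expand2]
    rw [Finset.sum_sub_distrib, Finset.sum_add_distrib, ← Finset.mul_sum, hs1,
      ← Finset.mul_sum, h1, ← Finset.mul_sum, h2]
    ring
  have hle : ∑ i, s i * ‖v + (q i - p)‖ ^ 2 ≤ ‖v‖ ^ 2 + 1 := by
    rw [hsum]; nlinarith [norm_nonneg p, sq_nonneg ‖p‖]
  -- some s i > 0
  obtain ⟨i0, _, hi0⟩ : ∃ i ∈ Finset.univ, 0 < s i := by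
    by_contra hc
    push_neg at hc
    have : ∑ i, s i ≤ 0 := Finset.sum_nonpos fun i hi => hc i hi
    linarith [hs1 ▸ this]
  have hlt : (‖v‖ ^ 2 + 1) * ∑ i, s i < ∑ i, s i * ‖v + (q i - p)‖ ^ 2 := by
    rw [Finset.mul_sum]
    apply Finset.sum_lt_sum
    · intro i _
      rw [mul_comm]
      exact mul_le_mul_of_nonneg_left (le_of_lt (h i)) (hs0 i)
    · exact ⟨i0, Finset.mem_univ i0, by rw [mul_comm]; exact (mul_lt_mul_iff_right₀ hi0).mpr (h i0)⟩
  rw [hs1, mul_one] at hlt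
  linarith

/-- For unit vectors `q₁, …, qₙ ∈ ℝ^m`, a distribution `s`, and every integer `N ≥ 1`,
there is a distribution `w'` with at most `N` nonzero entries such that
`‖∑ (sᵢ − w'ᵢ) qᵢ‖² ≤ 1/N`. -/
theorem sparse_approximation_of_convex_combination
    {n m : ℕ} (q : Fin n → EuclideanSpace ℝ (Fin m))
    (hq : ∀ i, ‖q i‖ = 1)
    (s : Fin n → ℝ) (hs0 : ∀ i, 0 ≤ s i) (hs1 : ∑ i, s i = 1)
    (N : ℕ) (hN : 1 ≤ N) :
    ∃ w' : Fin n → ℝ,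
      (∀ i, 0 ≤ w' i) ∧ (∑ i, w' i = 1) ∧
      {i | w' i ≠ 0}.ncard ≤ N ∧
      ‖∑ i, (s i - w' i) • q i‖ ^ 2 ≤ 1 / N := by
  set p : EuclideanSpace ℝ (Fin m) := ∑ i, s i • q i with hp
  have main : ∀ k : ℕ, ∃ c : Fin n → ℕ, (∑ i, c i = k) ∧
      ‖(∑ i, (c i : ℝ) • q i) - (k : ℝ) • p‖ ^ 2 ≤ (k : ℝ) := by
    intro k
    induction k with
    | zero =>
      refine ⟨fun _ => 0, by simp, by simp⟩
    | succ k ih =>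
      obtain ⟨c, hck, hcn⟩ := ih
      obtain ⟨i0, hi0⟩ := key_step q hq s hs0 hs1 p hp ((∑ i, (c i : ℝ) • q i) - (k : ℝ) • p)
      refine ⟨fun i => c i + if i = i0 then 1 else 0, ?_, ?_⟩
      · rw [Finset.sum_add_distrib, hck, Finset.sum_ite_eq' Finset.univ i0 (fun _ => 1)]
        simp
      · have hvec : (∑ i, ((c i + if i = i0 then 1 else 0 : ℕ) : ℝ) • q i)
            - ((k : ℕ) + 1 : ℝ) • p
            = ((∑ i, (c i : ℝ) • q i) - (k : ℝ) • p) + (q i0 - p) := by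
          have : ∀ i, ((c i + if i = i0 then 1 else 0 : ℕ) : ℝ) • q i
              = (c i : ℝ) • q i + (if i = i0 then q i else 0) := by
            intro i
            push_cast
            rw [add_smul]
            congr 1
            split <;> simp
          simp only [this]
          rw [Finset.sum_add_distrib, Finset.sum_ite_eq' Finset.univ i0 q]
          simp only [Finset.mem_univ, if_true]
          rw [add_smul, one_smul]
          abel
        rw [Nat.cast_add, Nat.cast_one, hvec]
        calc ‖_ + (q i0 - p)‖ ^ 2 ≤ ‖(∑ i, (c i : ℝ) • q i) - (k : ℝ) • p‖ ^ 2 + 1 := hi0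
          _ ≤ (k : ℝ) + 1 := by linarith
  obtain ⟨c, hck, hcn⟩ := main N
  have hNpos : (0 : ℝ) < N := by exact_mod_cast hN
  refine ⟨fun i => (c i : ℝ) / N, fun i => by positivity, ?_, ?_, ?_⟩
  · rw [← Finset.sum_div]
    rw [show ∑ i, ((c i : ℕ) : ℝ) = ((∑ i, c i : ℕ) : ℝ) by push_cast; rfl, hck]
    field_simp
  · have hsub : {i : Fin n | (c i : ℝ) / N ≠ 0} ⊆ ↑(Finset.univ.filter fun i => c i ≠ 0) := by
      intro i hi
      simp only [Finset.coe_filter, Set.mem_setOf_eq, Finset.mem_univ, true_and]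
      intro h0
      apply hi
      simp [h0]
    calc {i : Fin n | (c i : ℝ) / N ≠ 0}.ncard
        ≤ (Finset.univ.filter fun i => c i ≠ 0).card := by
          rw [← Set.ncard_coe_finset]
          exact Set.ncard_le_ncard hsub (Finset.finite_toSet _)
      _ ≤ ∑ i ∈ Finset.univ.filter (fun i => c i ≠ 0), c i := by
          rw [show (Finset.univ.filter fun i => c i ≠ 0).card
              = ∑ i ∈ Finset.univ.filter (fun i => c i ≠ 0), 1 by simp]
          exact Finset.sum_le_sum (fun i hi => by
            simp only [Finset.mem_filter] at hi; omega)
      _ ≤ ∑ i, c i := Finset.sum_le_sum_of_subset (Finset.filter_subset _ _)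
      _ = N := hck
  · have hrw : (∑ i, (s i - (c i : ℝ) / N) • q i)
        = -((N : ℝ)⁻¹ • ((∑ i, (c i : ℝ) • q i) - (N : ℝ) • p)) := by
      simp only [sub_smul, Finset.sum_sub_distrib, smul_sub, ← Finset.smul_sum]
      rw [smul_smul, inv_mul_cancel₀ (ne_of_gt hNpos), one_smul]
      rw [← hp]
      have : ∀ i, ((c i : ℝ) / N) • q i = (N : ℝ)⁻¹ • ((c i : ℝ) • q i) := by
        intro i
        rw [smul_smul, div_eq_inv_mul]
      simp only [this, ← Finset.smul_sum]
      abel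
    rw [hrw, norm_neg, norm_smul]
    rw [mul_pow]
    have : ‖(N : ℝ)⁻¹‖ ^ 2 = ((N : ℝ) ^ 2)⁻¹ := by
      rw [Real.norm_eq_abs, abs_of_pos (by positivity), ← inv_pow]
    rw [this]
    rw [div_eq_mul_inv, one_mul]
    calc ((N:ℝ)^2)⁻¹ * ‖(∑ i, (c i : ℝ) • q i) - (N : ℝ) • p‖ ^ 2
        ≤ ((N:ℝ)^2)⁻¹ * N := by
          apply mul_le_mul_of_nonneg_left hcn (by positivity)
      _ = (N:ℝ)⁻¹ := by field_simp
end

section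
/- Let p_1, ..., p_n ∈ ℝ^d, u ∈ D^n a distribution, E_u = Σ_i u_i p_i, x = Σ_j u_j ‖p_j − E_u‖ > 0, v = Σ_j u_j ‖(p_j − E_u, x)‖, q_i = (p_i − E_u, x)/‖(p_i − E_u, x)‖, and s_i = u_i ‖(p_i − E_u, x)‖ / v. Let w' ∈ D^n be any distribution, define w''_i = v·w'_i / ‖(p_i − E_u, x)‖ for each i, assume Σ_j w''_j > 0, and define w_i = w''_i / Σ_j w''_j. Then w ∈ D^n and ‖Σ_i u_i p_i − Σ_i w_i p_i‖² = v² · ‖Σ_i (s_i − w'_i / Σ_j w''_j) q_i‖². -/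
open Finset

/-- `append a t` is the vector in `ℝ^{d+1}` obtained from `a ∈ ℝ^d` by appending the
coordinate `t`. -/
noncomputable def append {d : ℕ} (a : EuclideanSpace ℝ (Fin d)) (t : ℝ) :
    EuclideanSpace ℝ (Fin (d + 1)) :=
  (WithLp.equiv 2 (Fin (d + 1) → ℝ)).symm (Fin.snoc ((WithLp.equiv 2 (Fin d → ℝ)) a) t)

lemma append_apply_castSucc {d : ℕ} (a : EuclideanSpace ℝ (Fin d)) (t : ℝ) (i : Fin d) :
    append a t i.castSucc = a i := by
  simp [append]

lemma append_apply_last {d : ℕ} (a : EuclideanSpace ℝ (Fin d)) (t : ℝ) :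
    append a t (Fin.last d) = t := by
  simp [append]

lemma append_add {d : ℕ} (a b : EuclideanSpace ℝ (Fin d)) (t s : ℝ) :
    append a t + append b s = append (a + b) (t + s) := by
  ext i
  refine Fin.lastCases ?_ ?_ i <;>
    simp [append_apply_last, append_apply_castSucc, PiLp.add_apply]

lemma append_smul {d : ℕ} (c : ℝ) (a : EuclideanSpace ℝ (Fin d)) (t : ℝ) :
    c • append a t = append (c • a) (c * t) := by
  ext i
  refine Fin.lastCases ?_ ?_ i <;>
    simp [append_apply_last, append_apply_castSucc, PiLp.smul_apply]

lemma append_zero {d : ℕ} : append (0 : EuclideanSpace ℝ (Fin d)) 0 = 0 := by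
  ext i
  refine Fin.lastCases ?_ ?_ i <;>
    simp [append_apply_last, append_apply_castSucc]

lemma norm_append_zero {d : ℕ} (b : EuclideanSpace ℝ (Fin d)) :
    ‖append b 0‖ = ‖b‖ := by
  rw [EuclideanSpace.norm_eq, EuclideanSpace.norm_eq, Fin.sum_univ_castSucc]
  simp [append_apply_last, append_apply_castSucc]

lemma append_sum {d : ℕ} {ι : Type*} (T : Finset ι) (a : ι → EuclideanSpace ℝ (Fin d))
    (t : ι → ℝ) :
    ∑ i ∈ T, append (a i) (t i) = append (∑ i ∈ T, a i) (∑ i ∈ T, t i) := by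
  induction T using Finset.cons_induction with
  | empty => simp [append_zero]
  | cons i T hi ih => simp [Finset.sum_cons, ih, append_add]

/-- In the normalized setting, for any distribution `w'` with `w''ᵢ = v·w'ᵢ/‖(pᵢ−E_u,x)‖`
and `wᵢ = w''ᵢ / ∑ⱼ w''ⱼ`, the vector `w` is a distribution and
`‖∑ uᵢ pᵢ − ∑ wᵢ pᵢ‖² = v² ‖∑ (sᵢ − w'ᵢ/∑ⱼ w''ⱼ) qᵢ‖²`. -/
theorem error_identity_in_normalized_coordinates
    {n d : ℕ} (p : Fin n → EuclideanSpace ℝ (Fin d)) (u : Fin n → ℝ)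
    (hu0 : ∀ i, 0 ≤ u i) (hu1 : ∑ i, u i = 1)
    (Eu : EuclideanSpace ℝ (Fin d)) (hEu : Eu = ∑ i, u i • p i)
    (x : ℝ) (hx : x = ∑ j, u j * ‖p j - Eu‖) (hxpos : 0 < x)
    (v : ℝ) (hv : v = ∑ j, u j * ‖append (p j - Eu) x‖)
    (q : Fin n → EuclideanSpace ℝ (Fin (d + 1)))
    (hq : ∀ i, q i = ‖append (p i - Eu) x‖⁻¹ • append (p i - Eu) x)
    (s : Fin n → ℝ) (hs : ∀ i, s i = u i * ‖append (p i - Eu) x‖ / v)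
    (w' : Fin n → ℝ) (hw'0 : ∀ i, 0 ≤ w' i) (hw'1 : ∑ i, w' i = 1)
    (w'' : Fin n → ℝ) (hw'' : ∀ i, w'' i = v * w' i / ‖append (p i - Eu) x‖)
    (hw''pos : 0 < ∑ j, w'' j)
    (w : Fin n → ℝ) (hw : ∀ i, w i = w'' i / ∑ j, w'' j) :
    ((∀ i, 0 ≤ w i) ∧ ∑ i, w i = 1) ∧
    ‖(∑ i, u i • p i) - ∑ i, w i • p i‖ ^ 2 =
      v ^ 2 * ‖∑ i, (s i - w' i / ∑ j, w'' j) • q i‖ ^ 2 := by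
  have hNpos : ∀ i, 0 < ‖append (p i - Eu) x‖ := by
    intro i
    rw [norm_pos_iff]
    intro h
    have hx0 : append (p i - Eu) x (Fin.last d) = 0 := by rw [h]; rfl
    rw [append_apply_last] at hx0
    exact absurd hx0 hxpos.ne'
  have hv0 : 0 < v := by
    obtain ⟨j, hj⟩ : ∃ j, 0 < u j := by
      by_contra hcon
      push_neg at hcon
      have : ∑ i, u i ≤ 0 := Finset.sum_nonpos fun i _ => hcon i
      linarith
    rw [hv]
    exact Finset.sum_pos' (fun i _ => mul_nonneg (hu0 i) (norm_nonneg _))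
      ⟨j, Finset.mem_univ j, mul_pos hj (hNpos j)⟩
  have hw''0 : ∀ i, 0 ≤ w'' i := fun i => by
    rw [hw'' i]; exact div_nonneg (mul_nonneg hv0.le (hw'0 i)) (norm_nonneg _)
  have hw0 : ∀ i, 0 ≤ w i := fun i => by
    rw [hw i]; exact div_nonneg (hw''0 i) hw''pos.le
  have hwsum : ∑ i, w i = 1 := by
    simp only [hw]
    rw [← Finset.sum_div, div_self hw''pos.ne']
  refine ⟨⟨hw0, hwsum⟩, ?_⟩
  have term : ∀ i, v • ((s i - w' i / ∑ j, w'' j) • q i) =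
      (u i - w i) • append (p i - Eu) x := by
    intro i
    rw [hq i, smul_smul, smul_smul]
    congr 1
    rw [hs i, hw i, hw'' i]
    field_simp [hv0.ne', (hNpos i).ne', hw''pos.ne']
  have key : v • (∑ i, (s i - w' i / ∑ j, w'' j) • q i) =
      append ((∑ i, u i • p i) - ∑ i, w i • p i) 0 := by
    rw [Finset.smul_sum]
    simp only [term]
    have : ∀ i ∈ Finset.univ, (u i - w i) • append (p i - Eu) x =
        append ((u i - w i) • (p i - Eu)) ((u i - w i) * x) := fun i _ => append_smul _ _ _
    rw [Finset.sum_congr rfl this, append_sum]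
    have h1 : ∑ i, (u i - w i) • (p i - Eu) = (∑ i, u i • p i) - ∑ i, w i • p i := by
      simp only [smul_sub, sub_smul, Finset.sum_sub_distrib]
      rw [← Finset.sum_smul, ← Finset.sum_smul, hu1, hwsum]
      abel
    have h2 : ∑ i, (u i - w i) * x = 0 := by
      rw [← Finset.sum_mul, Finset.sum_sub_distrib, hu1, hwsum]
      ring
    rw [h1, h2]
  calc ‖(∑ i, u i • p i) - ∑ i, w i • p i‖ ^ 2
      = ‖append ((∑ i, u i • p i) - ∑ i, w i • p i) 0‖ ^ 2 := by rw [norm_append_zero]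
    _ = ‖v • (∑ i, (s i - w' i / ∑ j, w'' j) • q i)‖ ^ 2 := by rw [key]
    _ = v ^ 2 * ‖∑ i, (s i - w' i / ∑ j, w'' j) • q i‖ ^ 2 := by
        rw [norm_smul, Real.norm_eq_abs, abs_of_pos hv0, mul_pow]
end

section
/- Let c, h ∈ ℝ^d with c ≠ h, ‖h‖ ≤ 1, and ⟨c, h⟩ ≤ 0, where ⟨·,·⟩ is the Euclidean inner product. Let c' be the point of the closed segment [c, h] = {(1−λ)c + λh : λ ∈ [0, 1]} closest to the origin. Then ‖c'‖² ≤ ‖c‖² / (1 + ‖c‖²). -/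
open scoped RealInnerProductSpace

/-- If `c ≠ h`, `‖h‖ ≤ 1`, and `⟪c, h⟫ ≤ 0`, then the point `c'` of the segment `[c, h]`
closest to the origin satisfies `‖c'‖² ≤ ‖c‖²/(1 + ‖c‖²)`. -/
theorem closest_point_of_segment_norm_sq_bound
    {d : ℕ} (c h : EuclideanSpace ℝ (Fin d)) (hch : c ≠ h)
    (hh : ‖h‖ ≤ 1) (hinner : ⟪c, h⟫ ≤ 0)
    (c' : EuclideanSpace ℝ (Fin d)) (hc'mem : c' ∈ segment ℝ c h)
    (hc'min : ∀ y ∈ segment ℝ c h, ‖c'‖ ≤ ‖y‖) :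
    ‖c'‖ ^ 2 ≤ ‖c‖ ^ 2 / (1 + ‖c‖ ^ 2) := by
  set a := ‖c‖ ^ 2 with ha
  have ha0 : (0:ℝ) ≤ a := by positivity
  have hpos : (0:ℝ) < 1 + a := by linarith
  set l : ℝ := a / (1 + a) with hl
  have hl0 : 0 ≤ l := by positivity
  have hl1 : l ≤ 1 := by
    rw [hl, div_le_one hpos]; linarith
  set y : EuclideanSpace ℝ (Fin d) := (1 - l) • c + l • h with hy
  have hymem : y ∈ segment ℝ c h := ⟨1 - l, l, by linarith, hl0, by ring, rfl⟩
  have hle : ‖c'‖ ≤ ‖y‖ := hc'min y hymem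
  have hysq : ‖y‖ ^ 2 = (1 - l) ^ 2 * ‖c‖ ^ 2 + 2 * ((1 - l) * l) * ⟪c, h⟫
      + l ^ 2 * ‖h‖ ^ 2 := by
    rw [hy, @norm_add_sq_real, norm_smul, norm_smul, real_inner_smul_left,
      real_inner_smul_right]
    rw [Real.norm_eq_abs, Real.norm_eq_abs, abs_of_nonneg (by linarith : (0:ℝ) ≤ 1 - l),
      abs_of_nonneg hl0]
    ring
  have hysq_le : ‖y‖ ^ 2 ≤ a / (1 + a) := by
    have h1 : (1 - l) * l * ⟪c, h⟫ ≤ 0 :=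
      mul_nonpos_of_nonneg_of_nonpos (mul_nonneg (by linarith) hl0) hinner
    have h2 : l ^ 2 * ‖h‖ ^ 2 ≤ l ^ 2 := by
      have hh2 : ‖h‖ ^ 2 ≤ 1 := by nlinarith [norm_nonneg h]
      nlinarith [sq_nonneg l]
    have key : (1 - l) ^ 2 * a + l ^ 2 = a / (1 + a) := by
      rw [hl]; field_simp; ring
    rw [hysq, ← ha]
    nlinarith
  have hc'sq : ‖c'‖ ^ 2 ≤ ‖y‖ ^ 2 := by
    have := norm_nonneg c'
    nlinarith
  linarith
end

section
/- Let q_1, ..., q_n be unit vectors in ℝ^d, not all equal, and let s ∈ D^n be a distribution with Σ_{i=1}^n s_i q_i = 0. Define a sequence (c_i) by c_1 = q_1 and, for i ≥ 1, letting h_{i+1} be a point of {q_1, ..., q_n} farthest (in Euclidean distance) from c_i and c_{i+1} the point of the segment [c_i, h_{i+1}] closest to the origin. Then for every i ≥ 1, ‖c_i‖² ≤ 1/i. -/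
open Finset RealInnerProductSpace

/-- Frank–Wolfe iterations: starting at `c₁ = q₁`, repeatedly taking the farthest point
`h_{i+1}` among `q₁, …, qₙ` from `cᵢ` and letting `c_{i+1}` be the point of the segment
`[cᵢ, h_{i+1}]` closest to the origin, one has `‖cᵢ‖² ≤ 1/i` for every `i ≥ 1`, provided
the `qⱼ` are unit vectors, not all equal, with `∑ sⱼ qⱼ = 0` for a distribution `s`. -/
theorem frank_wolfe_norm_sq_le
    {n d : ℕ} (hn : 0 < n) (q : Fin n → EuclideanSpace ℝ (Fin d))
    (hq : ∀ i, ‖q i‖ = 1)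
    (hne : ∃ i j, q i ≠ q j)
    (s : Fin n → ℝ) (hs0 : ∀ i, 0 ≤ s i) (hs1 : ∑ i, s i = 1)
    (hmean : ∑ i, s i • q i = 0)
    (c h : ℕ → EuclideanSpace ℝ (Fin d))
    (hc1 : c 1 = q ⟨0, hn⟩)
    (hfar_mem : ∀ i, 1 ≤ i → h (i + 1) ∈ Set.range q)
    (hfar : ∀ i, 1 ≤ i → ∀ j, ‖c i - q j‖ ≤ ‖c i - h (i + 1)‖)
    (hproj_mem : ∀ i, 1 ≤ i → c (i + 1) ∈ segment ℝ (c i) (h (i + 1)))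
    (hproj_min : ∀ i, 1 ≤ i → ∀ y ∈ segment ℝ (c i) (h (i + 1)), ‖c (i + 1)‖ ≤ ‖y‖) :
    ∀ i, 1 ≤ i → ‖c i‖ ^ 2 ≤ 1 / (i : ℝ) := by
  intro i hi
  induction i, hi using Nat.le_induction with
  | base =>
    simp [hc1, hq]
  | succ i hi ih =>
    have hiR : (1 : ℝ) ≤ (i : ℝ) := by exact_mod_cast hi
    -- norm of h (i+1)
    obtain ⟨k, hk⟩ := hfar_mem i hi
    have hh1 : ‖h (i + 1)‖ = 1 := by rw [← hk]; exact hq k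
    -- there is j with ⟪c i, q j⟫ ≤ 0
    have hsum : ∑ j, s j * ⟪c i, q j⟫ = 0 := by
      have : ⟪c i, ∑ j, s j • q j⟫ = 0 := by rw [hmean, inner_zero_right]
      rw [inner_sum] at this
      simp_rw [real_inner_smul_right] at this
      exact this
    have hexj : ∃ j, ⟪c i, q j⟫ ≤ 0 := by
      by_contra hcon
      push_neg at hcon
      obtain ⟨j0, hj0⟩ : ∃ j0, 0 < s j0 := by
        by_contra hc2
        push_neg at hc2
        have : ∑ j, s j = 0 := Finset.sum_eq_zero fun j _ => le_antisymm (hc2 j) (hs0 j)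
        rw [hs1] at this; norm_num at this
      have hpos : 0 < ∑ j, s j * ⟪c i, q j⟫ :=
        Finset.sum_pos' (fun j _ => mul_nonneg (hs0 j) (hcon j).le)
          ⟨j0, Finset.mem_univ j0, mul_pos hj0 (hcon j0)⟩
      rw [hsum] at hpos; exact lt_irrefl _ hpos
    obtain ⟨j, hj⟩ := hexj
    -- inner product with h is ≤ 0
    have hfj := hfar i hi j
    have hsq : ‖c i - q j‖ ^ 2 ≤ ‖c i - h (i + 1)‖ ^ 2 :=
      pow_le_pow_left₀ (norm_nonneg _) hfj 2
    have e1 : ‖c i - q j‖ ^ 2 = ‖c i‖ ^ 2 - 2 * ⟪c i, q j⟫ + 1 := by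
      rw [norm_sub_sq_real, hq j]; ring
    have e2 : ‖c i - h (i + 1)‖ ^ 2 = ‖c i‖ ^ 2 - 2 * ⟪c i, h (i + 1)⟫ + 1 := by
      rw [norm_sub_sq_real, hh1]; ring
    have hch : ⟪c i, h (i + 1)⟫ ≤ 0 := by
      rw [e1, e2] at hsq; linarith
    -- candidate point on segment
    set t : ℝ := 1 / ((i : ℝ) + 1) with ht
    have ht0 : 0 ≤ t := by positivity
    have ht1 : t ≤ 1 := by
      rw [ht, div_le_one (by linarith)]; linarith
    set y : EuclideanSpace ℝ (Fin d) := (1 - t) • c i + t • h (i + 1) with hy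
    have hymem : y ∈ segment ℝ (c i) (h (i + 1)) :=
      ⟨1 - t, t, by linarith, ht0, by ring, rfl⟩
    have hle : ‖c (i + 1)‖ ≤ ‖y‖ := hproj_min i hi y hymem
    have hle2 : ‖c (i + 1)‖ ^ 2 ≤ ‖y‖ ^ 2 :=
      pow_le_pow_left₀ (norm_nonneg _) hle 2
    have hynorm : ‖y‖ ^ 2 = (1 - t) ^ 2 * ‖c i‖ ^ 2
        + 2 * ((1 - t) * t) * ⟪c i, h (i + 1)⟫ + t ^ 2 := by
      rw [hy, norm_add_sq_real, norm_smul, norm_smul, real_inner_smul_left,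
        real_inner_smul_right, hh1]
      rw [mul_pow, mul_pow]
      have h1 : |1 - t| = 1 - t := abs_of_nonneg (by linarith)
      have h2 : |t| = t := abs_of_nonneg ht0
      simp only [Real.norm_eq_abs, h1, h2]
      ring
    have hbound : ‖y‖ ^ 2 ≤ (1 - t) ^ 2 * (1 / (i : ℝ)) + t ^ 2 := by
      rw [hynorm]
      have h3 : 2 * ((1 - t) * t) * ⟪c i, h (i + 1)⟫ ≤ 0 := by
        apply mul_nonpos_of_nonneg_of_nonpos _ hch
        have : 0 ≤ 1 - t := by linarith
        positivity
      nlinarith [sq_nonneg (1 - t)]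
    have hfin : (1 - t) ^ 2 * (1 / (i : ℝ)) + t ^ 2 = 1 / ((i : ℝ) + 1) := by
      rw [ht]
      have hi0 : (i : ℝ) ≠ 0 := by linarith
      have hi1 : (i : ℝ) + 1 ≠ 0 := by linarith
      field_simp
      ring
    push_cast
    calc ‖c (i + 1)‖ ^ 2 ≤ ‖y‖ ^ 2 := hle2
      _ ≤ (1 - t) ^ 2 * (1 / (i : ℝ)) + t ^ 2 := hbound
      _ = 1 / ((i : ℝ) + 1) := hfin
end

section
/- Let q_1, ..., q_n ∈ ℝ^m lie in the closed unit ball, let s ∈ D^n be a distribution, and let μ = Σ_{i=1}^n s_i q_i. Then for every integer N ≥ 1 there exist a subset S ⊆ [n] with |S| ≤ N and nonnegative weights (w'_i)_{i∈S} with Σ_{i∈S} w'_i = 1 such that ‖μ − Σ_{i∈S} w'_i q_i‖² ≤ (1/N)·(Σ_{i=1}^n s_i ‖q_i − μ‖²), where ‖·‖ is the Euclidean norm. -/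
open Finset

section Aux

variable {E : Type*} [NormedAddCommGroup E] [InnerProductSpace ℝ E]

lemma exists_le_weighted_mean {n : ℕ} (s : Fin n → ℝ) (hs0 : ∀ i, 0 ≤ s i)
    (hs1 : ∑ i, s i = 1) (a : Fin n → ℝ) :
    ∃ i, a i ≤ ∑ j, s j * a j := by
  by_contra h
  push_neg at h
  obtain ⟨i0, hi0⟩ : ∃ i, 0 < s i := by
    by_contra h'
    push_neg at h'
    have : ∑ i, s i = 0 := Finset.sum_eq_zero fun i _ => le_antisymm (h' i) (hs0 i)
    rw [this] at hs1; norm_num at hs1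
  have key : ∑ j, s j * (∑ j, s j * a j) < ∑ j, s j * a j := by
    apply Finset.sum_lt_sum
    · intro j _
      exact mul_le_mul_of_nonneg_left (le_of_lt (h j)) (hs0 j)
    · exact ⟨i0, Finset.mem_univ i0, by
        exact mul_lt_mul_of_pos_left (h i0) hi0⟩
  rw [← Finset.sum_mul, hs1, one_mul] at key
  exact lt_irrefl _ key

lemma weighted_norm_expand {n : ℕ} (s : Fin n → ℝ) (hs1 : ∑ i, s i = 1)
    (u : Fin n → E) (hu : ∑ i, s i • u i = 0) (v : E) :
    ∑ i, s i * ‖v + u i‖ ^ 2 = ‖v‖ ^ 2 + ∑ i, s i * ‖u i‖ ^ 2 := by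
  have expand : ∀ w : E, ‖v + w‖ ^ 2 = ‖v‖ ^ 2 + 2 * inner ℝ v w + ‖w‖ ^ 2 := fun w =>
    norm_add_sq_real v w
  simp_rw [expand, mul_add]
  rw [Finset.sum_add_distrib, Finset.sum_add_distrib, ← Finset.sum_mul, hs1, one_mul]
  have hcross : ∑ i, s i * (2 * inner ℝ v (u i)) = 0 := by
    have : (inner ℝ v (∑ i, s i • u i) : ℝ) = ∑ i, s i * inner ℝ v (u i) := by
      rw [inner_sum]
      exact Finset.sum_congr rfl fun i _ => real_inner_smul_right v (u i) (s i)
    rw [hu, inner_zero_right] at this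
    calc ∑ i, s i * (2 * inner ℝ v (u i)) = 2 * ∑ i, s i * inner ℝ v (u i) := by
          rw [Finset.mul_sum]; exact Finset.sum_congr rfl fun i _ => by ring
      _ = 0 := by rw [← this]; ring
  rw [hcross, add_zero]

lemma maurey {n : ℕ} (q : Fin n → E) (s : Fin n → ℝ) (hs0 : ∀ i, 0 ≤ s i)
    (hs1 : ∑ i, s i = 1) (μ : E) (hμ : μ = ∑ i, s i • q i) :
    ∀ k : ℕ, 1 ≤ k → ∃ f : Fin k → Fin n,
      ‖μ - (k : ℝ)⁻¹ • ∑ j, q (f j)‖ ^ 2 ≤ (∑ i, s i * ‖q i - μ‖ ^ 2) / k := by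
  set σ : ℝ := ∑ i, s i * ‖q i - μ‖ ^ 2 with hσ
  have hσ0 : 0 ≤ σ := Finset.sum_nonneg fun i _ => mul_nonneg (hs0 i) (by positivity)
  -- the "centered" vectors
  set u : Fin n → E := fun i => μ - q i with hudef
  have hu : ∑ i, s i • u i = 0 := by
    simp only [hudef, smul_sub]
    rw [Finset.sum_sub_distrib, ← hμ, ← Finset.sum_smul, hs1, one_smul, sub_self]
  have hunorm : ∀ i, ‖u i‖ = ‖q i - μ‖ := fun i => norm_sub_rev μ (q i)
  have key : ∀ v : E, ∃ i : Fin n, ‖v + u i‖ ^ 2 ≤ ‖v‖ ^ 2 + σ := by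
    intro v
    obtain ⟨i, hi⟩ := exists_le_weighted_mean s hs0 hs1 (fun i => ‖v + u i‖ ^ 2)
    refine ⟨i, hi.trans_eq ?_⟩
    rw [weighted_norm_expand s hs1 u hu v]
    congr 1
    exact Finset.sum_congr rfl fun i _ => by rw [hunorm]
  intro k hk
  induction k with
  | zero => omega
  | succ k ih =>
    rcases Nat.eq_or_lt_of_le hk with hk1 | hk1
    · -- base case k+1 = 1
      obtain ⟨k0, rfl⟩ : k = 0 := by omega
      obtain ⟨i, hi⟩ := key 0
      refine ⟨fun _ => i, ?_⟩
      simp only [zero_add, Nat.cast_one, inv_one, one_smul, div_one]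
      have : ∑ j : Fin 1, q i = q i := by simp
      rw [this]
      have h2 := hi
      rw [zero_add, norm_zero] at h2
      simpa [hudef] using h2
    · have hk' : 1 ≤ k := by omega
      obtain ⟨f, hf⟩ := ih hk'
      set T : E := ∑ j, q (f j) with hT
      set v : E := (k : ℝ) • μ - T with hv
      obtain ⟨i, hi⟩ := key v
      refine ⟨Fin.snoc (α := fun _ => Fin n) f i, ?_⟩
      have hsum : ∑ j : Fin (k + 1), q (Fin.snoc (α := fun _ => Fin n) f i j) = T + q i := by
        simp [Fin.sum_univ_castSucc, hT]
      rw [hsum]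
      have hkpos : (0 : ℝ) < (k : ℝ) := by exact_mod_cast Nat.pos_of_ne_zero (by omega)
      have hk1pos : (0 : ℝ) < (k : ℝ) + 1 := by positivity
      have heq : μ - ((k : ℝ) + 1)⁻¹ • (T + q i) = ((k : ℝ) + 1)⁻¹ • (v + u i) := by
        have h1 : ((k : ℝ) + 1)⁻¹ • (((k : ℝ) + 1) • μ) = μ :=
          inv_smul_smul₀ (ne_of_gt hk1pos) μ
        simp only [hv, hudef, smul_add, smul_sub]
        rw [add_smul, one_smul] at h1
        rw [smul_add] at h1
        abel_nf
        abel_nf at h1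
        rw [h1]; abel
      have hcast : ((k : ℕ) + 1 : ℝ) = (k : ℝ) + 1 := by push_cast; ring
      rw [Nat.cast_add, Nat.cast_one, heq]
      have hvnorm : ‖v‖ ^ 2 ≤ (k : ℝ) * σ := by
        have : v = (k : ℝ) • (μ - (k : ℝ)⁻¹ • T) := by
          rw [smul_sub, smul_inv_smul₀ (ne_of_gt hkpos)]
        rw [this, norm_smul, mul_pow, Real.norm_eq_abs, abs_of_pos hkpos, sq]
        calc (k : ℝ) * (k : ℝ) * ‖μ - (k : ℝ)⁻¹ • T‖ ^ 2
            ≤ (k : ℝ) * (k : ℝ) * (σ / k) := by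
              apply mul_le_mul_of_nonneg_left hf (by positivity)
          _ = (k : ℝ) * σ := by field_simp
      rw [norm_smul, Real.norm_eq_abs, abs_of_pos (by positivity), mul_pow]
      calc (((k : ℝ) + 1)⁻¹) ^ 2 * ‖v + u i‖ ^ 2
          ≤ (((k : ℝ) + 1)⁻¹) ^ 2 * ((k : ℝ) * σ + σ) := by
            apply mul_le_mul_of_nonneg_left (hi.trans (by linarith)) (by positivity)
        _ = σ / ((k : ℝ) + 1) := by field_simp

end Aux

/-- For points `q₁, …, qₙ` in the closed unit ball of `ℝ^m`, a distribution `s` with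
weighted mean `μ = ∑ sᵢ qᵢ`, and every integer `N ≥ 1`, there are a subset `S ⊆ [n]`
with `|S| ≤ N` and nonnegative weights on `S` summing to `1` with
`‖μ − ∑_{i∈S} w'ᵢ qᵢ‖² ≤ (1/N)·∑ᵢ sᵢ ‖qᵢ − μ‖²`. -/
theorem sparse_mean_approximation_in_unit_ball
    {n m : ℕ} (q : Fin n → EuclideanSpace ℝ (Fin m))
    (hq : ∀ i, ‖q i‖ ≤ 1)
    (s : Fin n → ℝ) (hs0 : ∀ i, 0 ≤ s i) (hs1 : ∑ i, s i = 1)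
    (μ : EuclideanSpace ℝ (Fin m)) (hμ : μ = ∑ i, s i • q i)
    (N : ℕ) (hN : 1 ≤ N) :
    ∃ (S : Finset (Fin n)) (w' : Fin n → ℝ),
      S.card ≤ N ∧
      (∀ i ∈ S, 0 ≤ w' i) ∧ (∑ i ∈ S, w' i = 1) ∧
      ‖μ - ∑ i ∈ S, w' i • q i‖ ^ 2 ≤
        (1 / (N : ℝ)) * ∑ i, s i * ‖q i - μ‖ ^ 2 := by
  obtain ⟨f, hf⟩ := maurey q s hs0 hs1 μ hμ N hN
  classical
  set S : Finset (Fin n) := Finset.image f Finset.univ with hS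
  set w' : Fin n → ℝ := fun i => ((Finset.univ.filter fun j => f j = i).card : ℝ) / N
    with hw'
  have hNpos : (0 : ℝ) < N := by exact_mod_cast hN
  refine ⟨S, w', ?_, ?_, ?_, ?_⟩
  · calc S.card ≤ (Finset.univ : Finset (Fin N)).card := Finset.card_image_le
      _ = N := by simp
  · intro i _
    exact div_nonneg (by positivity) (le_of_lt hNpos)
  · have hcard := Finset.card_eq_sum_card_image f (Finset.univ : Finset (Fin N))
    simp only [hw']
    rw [← Finset.sum_div]
    rw [div_eq_one_iff_eq (ne_of_gt hNpos)]
    rw [← Nat.cast_sum]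
    norm_cast
    rw [← hcard]
    simp
  · have hrepr : ∑ i ∈ S, w' i • q i = (N : ℝ)⁻¹ • ∑ j, q (f j) := by
      have step : ∑ i ∈ S, ((Finset.univ.filter fun j => f j = i).card : ℝ) • q i
          = ∑ j, q (f j) := by
        rw [← Finset.sum_fiberwise_of_maps_to (fun j _ => Finset.mem_image_of_mem f
          (Finset.mem_univ j)) (fun j => q (f j))]
        apply Finset.sum_congr rfl
        intro i _
        rw [Finset.sum_congr rfl (fun j hj => by
          rw [(Finset.mem_filter.mp hj).2]), Finset.sum_const, ← Nat.cast_smul_eq_nsmul ℝ]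
      rw [← step, Finset.smul_sum]
      apply Finset.sum_congr rfl
      intro i _
      simp only [hw', smul_smul, div_eq_inv_mul]
    rw [hrepr]
    calc ‖μ - (N : ℝ)⁻¹ • ∑ j, q (f j)‖ ^ 2
        ≤ (∑ i, s i * ‖q i - μ‖ ^ 2) / N := hf
      _ = (1 / (N : ℝ)) * ∑ i, s i * ‖q i - μ‖ ^ 2 := by ring
end
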